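/- arXiv:1410.5477 — 2 statements merged into one kernel-verified Lean document; each statement's English description precedes it below -/
import Mathlib

section
/- Suppose the exogenous stepsizes are α_k = β_k/η_k with η_k = max{1, ‖u^k‖} and there exists ρ ≥ 0 and w^k ∈ ∂g(x^k) with ‖w^k‖ ≤ ρ. Then for all x ∈ dom(g) and all k: ‖x^{k+1} − x‖² ≤ ‖x^k − x‖² + 2(β_k/η_k)[(f+g)(x) − (f+g)(x^k)] + (1 + 2ρ + ρ²)β_k². -/
open Filter Metric Finset Bornology
open scoped RealInnerProductSpace Topology

/-- `w` is a subgradient of `h` at `x`, where `s` is the effective domain of `h`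
(the extended-valued function equals `h` on `s` and `+∞` outside). -/
def HasSubgradAt {H : Type*} [NormedAddCommGroup H] [InnerProductSpace ℝ H]
    (s : Set H) (h : H → ℝ) (w x : H) : Prop :=
  ∀ y ∈ s, h x + (inner ℝ w (y - x) : ℝ) ≤ h y

/-- `p` is the proximal point `prox_{αg}(z)`, i.e. a minimizer over the domain `s` of
`y ↦ g y + (1/(2α)) ‖y - z‖²`. -/
def IsProxPt {H : Type*} [NormedAddCommGroup H] [InnerProductSpace ℝ H]
    (s : Set H) (g : H → ℝ) (α : ℝ) (z p : H) : Prop :=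
  p ∈ s ∧ ∀ y ∈ s, g p + (1/(2*α)) * ‖p - z‖^2 ≤ g y + (1/(2*α)) * ‖y - z‖^2

/-- Solution set of `min (f+g)` over the domain `s` of `g`. -/
def SolSet {H : Type*} [NormedAddCommGroup H] (s : Set H) (f g : H → ℝ) : Set H :=
  {z ∈ s | ∀ y ∈ s, f z + g z ≤ f y + g y}


/-! The proximal point `p = prox_{αg}(z)` satisfies the variational inequality
`⟪z - p, y - p⟫ ≤ α (g y - g p)`: compare `p` with `p + t (y - p)` and let `t → 0`.
Testing it at `x`, together with the subgradient inequalities of `f` at `xᵏ` (tested at `x`) and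
of `g` at `xᵏ` (tested at `xᵏ⁺¹`), the expansion of `‖xᵏ⁺¹ - x‖²` leaves the error term
`-‖d‖² - 2α⟪u + w, d⟫ ≤ α² ‖u + w‖²` with `d = xᵏ⁺¹ - xᵏ`; the normalisation
`α = β / max 1 ‖u‖` bounds `α ‖u + w‖` by `(1 + ρ) β`. -/

lemma nonpos_of_forall_mem_Ioc_le_mul {a c : ℝ} (h : ∀ t ∈ Set.Ioc (0 : ℝ) 1, a ≤ t * c) :
    a ≤ 0 := by
  have hlim : Tendsto (fun t : ℝ => t * c) (𝓝[>] 0) (𝓝 0) := by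
    simpa using ((continuous_mul_const c).tendsto 0).mono_left nhdsWithin_le_nhds
  refine ge_of_tendsto hlim ?_
  filter_upwards [Ioc_mem_nhdsGT (zero_lt_one' ℝ)] with t ht using h t ht

section

variable {H : Type*} [NormedAddCommGroup H] [InnerProductSpace ℝ H]

theorem IsProxPt.inner_sub_le {s : Set H} {g : H → ℝ} (hg : ConvexOn ℝ s g) {α : ℝ}
    (hα : 0 < α) {z p : H} (hp : IsProxPt s g α z p) {y : H} (hy : y ∈ s) :
    ⟪z - p, y - p⟫ ≤ α * (g y - g p) := by
  rw [← sub_nonpos]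
  refine nonpos_of_forall_mem_Ioc_le_mul (c := ‖y - p‖ ^ 2 / 2) fun t ⟨ht0, ht1⟩ => ?_
  have hcomb : p + t • (y - p) = (1 - t) • p + t • y := by
    rw [smul_sub, sub_smul, one_smul]; abel
  have hmin := hp.2 _ (hcomb ▸ hg.1 hp.1 hy (by linarith) ht0.le (by ring))
  have hconv : g (p + t • (y - p)) ≤ (1 - t) * g p + t * g y :=
    hcomb ▸ hg.2 hp.1 hy (by linarith) ht0.le (by ring)
  have hexpand : ‖p + t • (y - p) - z‖ ^ 2
      = ‖p - z‖ ^ 2 - 2 * t * ⟪z - p, y - p⟫ + t ^ 2 * ‖y - p‖ ^ 2 := by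
    rw [show p + t • (y - p) - z = (p - z) + t • (y - p) by abel, norm_add_sq_real,
      real_inner_smul_right, norm_smul, mul_pow, Real.norm_eq_abs, sq_abs,
      ← neg_sub z p, inner_neg_left]
    ring
  rw [hexpand] at hmin
  have hdescent :
      t * (g p - g y) ≤ (t ^ 2 * ‖y - p‖ ^ 2 - 2 * t * ⟪z - p, y - p⟫) / (2 * α) := by
    rw [div_eq_mul_one_div, mul_comm]; linarith
  have key :
      2 * t * (⟪z - p, y - p⟫ - α * (g y - g p)) ≤ 2 * t * (t * (‖y - p‖ ^ 2 / 2)) := by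
    rw [le_div_iff₀ (by positivity)] at hdescent
    linarith
  exact le_of_mul_le_mul_left key (by positivity)

theorem norm_sub_sq_le_of_isProxPt_of_hasSubgradAt {s sf : Set H} {f g : H → ℝ}
    (hg : ConvexOn ℝ s g) {α : ℝ} (hα : 0 < α) {xk p u w xx : H}
    (hp : IsProxPt s g α (xk - α • u) p) (hu : HasSubgradAt sf f u xk)
    (hw : HasSubgradAt s g w xk) (hxx : xx ∈ s) (hxxf : xx ∈ sf) :
    ‖p - xx‖ ^ 2 ≤ ‖xk - xx‖ ^ 2 + 2 * α * ((f xx + g xx) - (f xk + g xk))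
      + α ^ 2 * ‖u + w‖ ^ 2 := by
  have hprox := hp.inner_sub_le hg hα hxx
  have hf := hu xx hxxf
  have hgp := hw p hp.1
  have hsq : 0 ≤ ‖α • (u + w) + (p - xk)‖ ^ 2 := sq_nonneg _
  rw [show xk - α • u - p = -((p - xk) + α • u) by abel,
    show xx - p = -((p - xk) + (xk - xx)) by abel, inner_neg_neg, inner_add_left,
    inner_add_right, inner_add_right, real_inner_self_eq_norm_sq, real_inner_smul_left,
    real_inner_smul_left] at hprox
  rw [show xx - xk = -(xk - xx) by abel, inner_neg_right] at hf
  rw [norm_add_sq_real, real_inner_smul_left, inner_add_left, norm_smul, mul_pow,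
    Real.norm_eq_abs, sq_abs] at hsq
  rw [show p - xx = (p - xk) + (xk - xx) by abel, norm_add_sq_real]
  linarith [mul_le_mul_of_nonneg_left hf hα.le, mul_le_mul_of_nonneg_left hgp hα.le]

end

theorem div_max_one_norm_mul_norm_add_le {H : Type*} [SeminormedAddCommGroup H] {u w : H}
    {β ρ : ℝ} (hβ : 0 ≤ β) (hw : ‖w‖ ≤ ρ) :
    β / max 1 ‖u‖ * ‖u + w‖ ≤ (1 + ρ) * β := by
  have hη : 1 ≤ max 1 ‖u‖ := le_max_left _ _
  have hρ : 0 ≤ ρ := (norm_nonneg w).trans hw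
  calc β / max 1 ‖u‖ * ‖u + w‖ ≤ β / max 1 ‖u‖ * (max 1 ‖u‖ * (1 + ρ)) := by
        gcongr
        calc ‖u + w‖ ≤ ‖u‖ + ρ := (norm_add_le u w).trans (by gcongr)
          _ ≤ max 1 ‖u‖ + max 1 ‖u‖ * ρ := by
            gcongr
            exacts [le_max_right _ _, le_mul_of_one_le_left hρ hη]
          _ = _ := by ring
    _ = (1 + ρ) * β := by field_simp

theorem pss_exogenous_one_step_inequality_general
    {H : Type*} [NormedAddCommGroup H] [InnerProductSpace ℝ H]
    (sf sg : Set H) (f g : H → ℝ)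
    (hconvg : ConvexOn ℝ sg g)
    (hdom : sg ⊆ sf)
    (x u w : ℕ → H) (β : ℕ → ℝ) (hβ : ∀ k, 0 < β k)
    (ρ : ℝ)
    (hu : ∀ k, HasSubgradAt sf f (u k) (x k))
    (hw : ∀ k, HasSubgradAt sg g (w k) (x k))
    (hwb : ∀ k, ‖w k‖ ≤ ρ)
    (hstep : ∀ k, IsProxPt sg g (β k / max 1 ‖u k‖)
      (x k - (β k / max 1 ‖u k‖) • u k) (x (k+1))) :
    ∀ xx ∈ sg, ∀ k : ℕ,
      ‖x (k+1) - xx‖^2 ≤ ‖x k - xx‖^2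
        + 2 * (β k / max 1 ‖u k‖) * ((f xx + g xx) - (f (x k) + g (x k)))
        + (1 + 2*ρ + ρ^2) * (β k)^2 := by
  intro xx hxx k
  have hα : 0 < β k / max 1 ‖u k‖ := div_pos (hβ k) (one_pos.trans_le (le_max_left _ _))
  have hstep_bound :
      (β k / max 1 ‖u k‖) ^ 2 * ‖u k + w k‖ ^ 2 ≤ (1 + 2*ρ + ρ^2) * (β k)^2 := by
    rw [← mul_pow, show (1 + 2*ρ + ρ^2) * (β k)^2 = ((1 + ρ) * β k) ^ 2 by ring]
    exact pow_le_pow_left₀ (by positivity)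
      (div_max_one_norm_mul_norm_add_le (hβ k).le (hwb k)) 2
  calc ‖x (k+1) - xx‖^2 ≤ ‖x k - xx‖^2
        + 2 * (β k / max 1 ‖u k‖) * ((f xx + g xx) - (f (x k) + g (x k)))
        + (β k / max 1 ‖u k‖) ^ 2 * ‖u k + w k‖ ^ 2 :=
      norm_sub_sq_le_of_isProxPt_of_hasSubgradAt hconvg hα (hstep k) (hu k) (hw k) hxx (hdom hxx)
    _ ≤ _ := by gcongr

theorem pss_exogenous_one_step_inequality
    {H : Type*} [NormedAddCommGroup H] [InnerProductSpace ℝ H] [CompleteSpace H]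
    (sf sg : Set H) (f g : H → ℝ)
    (hconvf : ConvexOn ℝ sf f) (hconvg : ConvexOn ℝ sg g)
    (hlscf : LowerSemicontinuousOn f sf) (hlscg : LowerSemicontinuousOn g sg)
    (hclg : IsClosed sg) (hdom : sg ⊆ sf) (hneg : sg.Nonempty)
    (x u w : ℕ → H) (β : ℕ → ℝ) (hβ : ∀ k, 0 < β k)
    (ρ : ℝ) (hρ : 0 ≤ ρ) (hx0 : x 0 ∈ sg)
    (hu : ∀ k, HasSubgradAt sf f (u k) (x k))
    (hw : ∀ k, HasSubgradAt sg g (w k) (x k))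
    (hwb : ∀ k, ‖w k‖ ≤ ρ)
    (hstep : ∀ k, IsProxPt sg g (β k / max 1 ‖u k‖)
      (x k - (β k / max 1 ‖u k‖) • u k) (x (k+1))) :
    ∀ xx ∈ sg, ∀ k : ℕ,
      ‖x (k+1) - xx‖^2 ≤ ‖x k - xx‖^2
        + 2 * (β k / max 1 ‖u k‖) * ((f xx + g xx) - (f (x k) + g (x k)))
        + (1 + 2*ρ + ρ^2) * (β k)^2 :=
  pss_exogenous_one_step_inequality_general sf sg f g hconvg hdom x u w β hβ ρ hu hw hwb hstep
end

section
/- Under exogenous stepsizes and assumptions A1, A2, if the solution set S* of min(f+g) is empty, then the sequence (x^k) generated by the proximal subgradient splitting method is unbounded. -/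
/-!
Suppose `(x k)` is bounded. By A1 the subgradients `u k` are then bounded by some `ζ`, so the
stepsizes `α k = β k / max 1 ‖u k‖` satisfy `α k ≥ β k / max 1 ζ` and `∑ α k = ∞`. The standard
estimate for one proximal subgradient step gives, for every `y ∈ dom g`,
`‖x (k+1) - y‖² ≤ ‖x k - y‖² + C β k ² + 2 α k ((f+g) y - (f+g) (x k))`, and since `∑ β k ² < ∞`
this forces `inf_k (f+g) (x k) ≤ (f+g) y`. The sublevel sets of `f + g` at the levels
`inf_k (f+g) (x k) + 1/(n+1)`, cut down to a ball containing the sequence, are nonempty, closed,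
convex, bounded and nested; in a Hilbert space such sets have a common point (this replaces weak
compactness), and that point minimizes `f + g`, contradicting `S* = ∅`.
-/

open Filter Metric Finset Bornology
open scoped RealInnerProductSpace Topology

theorem LowerSemicontinuousOn.isClosed_inter_preimage_Iic {α γ : Type*} [TopologicalSpace α]
    [LinearOrder γ] {f : α → γ} {s : Set α} (hf : LowerSemicontinuousOn f s) (hs : IsClosed s)
    (c : γ) : IsClosed (s ∩ f ⁻¹' Set.Iic c) := by
  obtain ⟨v, hv, hsv⟩ := lowerSemicontinuousOn_iff_preimage_Iic.1 hf c
  rw [hsv]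
  exact hs.inter hv

theorem sum_range_le_add_tsum_of_add_le_add {a b c : ℕ → ℝ} (ha : ∀ k, 0 ≤ a k)
    (hb : ∀ k, 0 ≤ b k) (hbs : Summable b) (h : ∀ k, a (k + 1) + c k ≤ a k + b k) (n : ℕ) :
    ∑ i ∈ range n, c i ≤ a 0 + ∑' i, b i := by
  have htelescope : ∀ n, a n + ∑ i ∈ range n, c i ≤ a 0 + ∑ i ∈ range n, b i := by
    intro n
    induction n with
    | zero => simp
    | succ n ih => rw [sum_range_succ, sum_range_succ]; linarith [h n]
  linarith [htelescope n, ha n, hbs.sum_le_tsum (range n) fun i _ => hb i]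

theorem tendsto_sum_div_max_one_atTop {β a : ℕ → ℝ} {ζ : ℝ} (hβ : ∀ k, 0 ≤ β k)
    (ha : ∀ k, a k ≤ ζ) (hdiv : Tendsto (fun n => ∑ i ∈ range n, β i) atTop atTop) :
    Tendsto (fun n => ∑ i ∈ range n, β i / max 1 (a i)) atTop atTop := by
  have hpos : ∀ c : ℝ, 0 < max 1 c := fun _ => lt_max_of_lt_left one_pos
  refine tendsto_atTop_mono (fun n => ?_) (hdiv.atTop_div_const (hpos ζ))
  rw [sum_div]
  exact sum_le_sum fun i _ =>
    div_le_div_of_nonneg_left (hβ i) (hpos _) (max_le_max le_rfl (ha i))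

theorem exists_lt_add_of_quasiFejer {E : Type*} [SeminormedAddCommGroup E] {S : Set E}
    {F : E → ℝ} {x : ℕ → E} {α b : ℕ → ℝ} (hα : ∀ k, 0 ≤ α k)
    (hαdiv : Tendsto (fun n => ∑ i ∈ range n, α i) atTop atTop) (hb : ∀ k, 0 ≤ b k)
    (hbs : Summable b)
    (hstep : ∀ k, ∀ y ∈ S,
      ‖x (k + 1) - y‖ ^ 2 ≤ ‖x k - y‖ ^ 2 + b k + 2 * α k * (F y - F (x k))) :
    ∀ y ∈ S, ∀ ε > 0, ∃ k, F (x k) < F y + ε := by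
  intro y hy ε hε
  by_contra! hnot
  have hbound := sum_range_le_add_tsum_of_add_le_add (a := fun k => ‖x k - y‖ ^ 2)
    (c := fun k => 2 * ε * α k) (fun _ => sq_nonneg _) hb hbs
    (fun k => by nlinarith [hstep k y hy, hnot k, hα k])
  obtain ⟨n, hn⟩ := (tendsto_atTop.1 (hαdiv.const_mul_atTop (by positivity : 0 < 2 * ε))
    (‖x 0 - y‖ ^ 2 + ∑' i, b i + 1)).exists
  linarith [hbound n, mul_sum (range n) α (2 * ε)]

theorem cauchySeq_of_dist_sq_le_sub {X : Type*} [PseudoMetricSpace X] {p : ℕ → X} {s : ℕ → ℝ}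
    (hbdd : BddAbove (Set.range s)) (h : ∀ n m, n ≤ m → dist (p n) (p m) ^ 2 ≤ s m - s n) :
    CauchySeq p := by
  have hmono : Monotone s := fun n m hnm => by nlinarith [h n m hnm, sq_nonneg (dist (p n) (p m))]
  set L := ⨆ n, s n
  have hle : ∀ n, s n ≤ L := le_ciSup hbdd
  refine cauchySeq_iff_le_tendsto_0.2 ⟨fun N => √(L - s N), fun _ => Real.sqrt_nonneg _,
    fun n m N hn hm => ?_, ?_⟩
  · refine (Real.le_sqrt dist_nonneg (by linarith [hle N])).2 ?_
    rcases le_total n m with hnm | hmn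
    · linarith [h n m hnm, hle m, hmono hn]
    · rw [dist_comm]; linarith [h m n hmn, hle n, hmono hm]
  · simpa [L] using ((tendsto_atTop_ciSup hmono hbdd).const_sub L).sqrt

section Hilbert

variable {H : Type*} [NormedAddCommGroup H] [InnerProductSpace ℝ H]

-- The points of minimal norm of the `D n` form a Cauchy sequence.
theorem Convex.nonempty_iInter_of_antitone [CompleteSpace H] {D : ℕ → Set H} (hD : Antitone D)
    (hne : ∀ n, (D n).Nonempty) (hcl : ∀ n, IsClosed (D n)) (hcv : ∀ n, Convex ℝ (D n))
    (hbd : IsBounded (D 0)) : (⋂ n, D n).Nonempty := by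
  have hproj : ∀ n, ∃ p ∈ D n, ∀ w ∈ D n, 0 ≤ ⟪p, w - p⟫ := fun n => by
    obtain ⟨p, hp, hpmin⟩ :=
      exists_norm_eq_iInf_of_complete_convex (hne n) (hcl n).isComplete (hcv n) 0
    refine ⟨p, hp, fun w hw => ?_⟩
    have := (norm_eq_iInf_iff_real_inner_le_zero (hcv n) hp).1 hpmin w hw
    rwa [zero_sub, inner_neg_left, neg_nonpos] at this
  choose p hpD hpmin using hproj
  have hdist : ∀ n m, n ≤ m → dist (p n) (p m) ^ 2 ≤ ‖p m‖ ^ 2 - ‖p n‖ ^ 2 := by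
    intro n m hnm
    have hexpand : ‖p m‖ ^ 2 = ‖p n‖ ^ 2 + 2 * ⟪p n, p m - p n⟫ + ‖p m - p n‖ ^ 2 := by
      rw [← norm_add_sq_real, add_sub_cancel]
    rw [dist_eq_norm, norm_sub_rev]
    linarith [hpmin n (p m) (hD hnm (hpD m))]
  obtain ⟨R, hR⟩ := hbd.subset_closedBall 0
  have hbdd : BddAbove (Set.range fun n => ‖p n‖ ^ 2) := by
    refine ⟨R ^ 2, ?_⟩
    rintro _ ⟨n, rfl⟩
    have := hR (hD (Nat.zero_le n) (hpD n))
    rw [mem_closedBall_zero_iff] at this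
    exact pow_le_pow_left₀ (norm_nonneg _) this 2
  obtain ⟨q, hq⟩ := cauchySeq_tendsto_of_complete (cauchySeq_of_dist_sq_le_sub hbdd hdist)
  refine ⟨q, Set.mem_iInter.2 fun n => (hcl n).mem_of_tendsto hq ?_⟩
  filter_upwards [eventually_ge_atTop n] with m hm
  exact hD hm (hpD m)

section Subgradient

variable {s t : Set H} {h k : H → ℝ} {w w' x y : H}

theorem HasSubgradAt.sub_le (hw : HasSubgradAt s h w x) (hy : y ∈ s) :
    h x - h y ≤ ‖w‖ * ‖y - x‖ := by
  linarith [hw y hy, neg_le_of_abs_le (abs_real_inner_le_norm w (y - x))]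

theorem HasSubgradAt.add (hh : HasSubgradAt s h w x) (hk : HasSubgradAt t k w' x) :
    HasSubgradAt (s ∩ t) (h + k) (w + w') x := fun y hy => by
  simp only [Pi.add_apply, inner_add_left]
  linarith [hh y hy.1, hk y hy.2]

theorem HasSubgradAt.bddBelow_image {V : Set H} (hw : HasSubgradAt s h w x) (hV : IsBounded V)
    (hVs : V ⊆ s) : BddBelow (h '' V) := by
  obtain ⟨R, hR⟩ := hV.subset_closedBall x
  refine ⟨h x - ‖w‖ * R, ?_⟩
  rintro _ ⟨y, hy, rfl⟩
  have hyR : ‖y - x‖ ≤ R := by simpa [dist_eq_norm] using hR hy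
  nlinarith [hw.sub_le (hVs hy), mul_le_mul_of_nonneg_left hyR (norm_nonneg w)]

end Subgradient

section Prox

variable {s sf : Set H} {f g : H → ℝ} {α : ℝ} {x y z u w p : H}

-- Compare `p` with `p + t • (y - p)` in the definition of the proximal point and let `t → 0⁺`.
theorem IsProxPt.inner_le (hp : IsProxPt s g α z p) (hg : ConvexOn ℝ s g) (hα : 0 < α)
    (hy : y ∈ s) : ⟪z - p, y - p⟫ ≤ α * (g y - g p) := by
  obtain ⟨hps, hmin⟩ := hp
  have hsmall : ∀ t ∈ Set.Ioc (0 : ℝ) 1,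
      ⟪z - p, y - p⟫ ≤ α * (g y - g p) + t / 2 * ‖y - p‖ ^ 2 := by
    rintro t ⟨ht0, ht1⟩
    have hseg : (1 - t) • p + t • y = p + t • (y - p) := by module
    have hmem : p + t • (y - p) ∈ s := hseg ▸ hg.1 hps hy (by linarith) ht0.le (by ring)
    have hconv : g (p + t • (y - p)) ≤ (1 - t) * g p + t * g y :=
      hseg ▸ hg.2 hps hy (by linarith) ht0.le (by ring)
    have hnorm : ‖p + t • (y - p) - z‖ ^ 2
        = ‖p - z‖ ^ 2 - 2 * t * ⟪z - p, y - p⟫ + t ^ 2 * ‖y - p‖ ^ 2 := by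
      rw [show p + t • (y - p) - z = (p - z) + t • (y - p) by abel, norm_add_sq_real,
        inner_smul_right, norm_smul, Real.norm_of_nonneg ht0.le, ← neg_sub z p, inner_neg_left]
      ring
    have hprox := hmin _ hmem
    rw [hnorm] at hprox
    have hinv : 1 / (2 * α) * (2 * α) = 1 := by field_simp
    have hdiv : t * ⟪z - p, y - p⟫ ≤ t * (α * (g y - g p) + t / 2 * ‖y - p‖ ^ 2) := by
      nlinarith
    exact le_of_mul_le_mul_left hdiv ht0
  have hlim : Tendsto (fun t : ℝ => α * (g y - g p) + t / 2 * ‖y - p‖ ^ 2) (𝓝[>] 0)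
      (𝓝 (α * (g y - g p))) := by
    have hcont : Continuous fun t : ℝ => α * (g y - g p) + t / 2 * ‖y - p‖ ^ 2 := by fun_prop
    simpa using (hcont.tendsto 0).mono_left nhdsWithin_le_nhds
  exact ge_of_tendsto hlim (Filter.mem_of_superset (Ioc_mem_nhdsGT one_pos) hsmall)

theorem IsProxPt.norm_sub_le (hp : IsProxPt s g α (x - α • u) p) (hg : ConvexOn ℝ s g)
    (hα : 0 < α) (hx : x ∈ s) (hw : HasSubgradAt s g w x) : ‖x - p‖ ≤ α * (‖u‖ + ‖w‖) := by
  have hvi := hp.inner_le hg hα hx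
  have hgp := hw.sub_le hp.1
  rw [show x - α • u - p = (x - p) - α • u by abel, inner_sub_left, real_inner_smul_left,
    real_inner_self_eq_norm_sq] at hvi
  rw [norm_sub_rev p x] at hgp
  have hsq : ‖x - p‖ ^ 2 ≤ α * (‖u‖ + ‖w‖) * ‖x - p‖ := by
    nlinarith [real_inner_le_norm u (x - p)]
  have hK : 0 ≤ α * (‖u‖ + ‖w‖) := by positivity
  nlinarith [norm_nonneg (x - p)]

theorem IsProxPt.norm_sub_sq_le (hp : IsProxPt s g α (x - α • u) p) (hg : ConvexOn ℝ s g)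
    (hα : 0 < α) (hx : x ∈ s) (hu : HasSubgradAt sf f u x) (hw : HasSubgradAt s g w x)
    (hyf : y ∈ sf) (hy : y ∈ s) :
    ‖p - y‖ ^ 2 ≤ ‖x - y‖ ^ 2 + α ^ 2 * ‖u‖ ^ 2 + 2 * α ^ 2 * ‖w‖ * (‖u‖ + ‖w‖)
      + 2 * α * ((f y + g y) - (f x + g x)) := by
  set z := x - α • u with hz
  have hpz : ‖p - y‖ ^ 2 = ‖z - y‖ ^ 2 - ‖z - p‖ ^ 2 + 2 * ⟪z - p, y - p⟫ := by
    simp only [← real_inner_self_eq_norm_sq, inner_sub_left, inner_sub_right, real_inner_comm]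
    ring
  have hzy : ‖z - y‖ ^ 2 = ‖x - y‖ ^ 2 + 2 * α * ⟪u, y - x⟫ + α ^ 2 * ‖u‖ ^ 2 := by
    rw [show z - y = (x - y) - α • u by rw [hz]; abel, norm_sub_sq_real, real_inner_smul_right,
      norm_smul, Real.norm_of_nonneg hα.le, ← neg_sub y x, inner_neg_left, real_inner_comm]
    ring
  have hgxp : α * (g x - g p) ≤ α * (‖w‖ * (α * (‖u‖ + ‖w‖))) := by
    gcongr
    calc g x - g p ≤ ‖w‖ * ‖p - x‖ := hw.sub_le hp.1
      _ ≤ ‖w‖ * (α * (‖u‖ + ‖w‖)) := by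
        rw [norm_sub_rev]
        gcongr
        exact hp.norm_sub_le hg hα hx hw
  have hfy : α * ⟪u, y - x⟫ ≤ α * (f y - f x) := by
    gcongr
    linarith [hu y hyf]
  nlinarith [hp.inner_le hg hα hy, sq_nonneg ‖z - p‖]

theorem IsProxPt.norm_sub_sq_le_of_exogenous {β ρ : ℝ}
    (hp : IsProxPt s g (β / max 1 ‖u‖) (x - (β / max 1 ‖u‖) • u) p) (hg : ConvexOn ℝ s g)
    (hβ : 0 < β) (hx : x ∈ s) (hu : HasSubgradAt sf f u x) (hw : HasSubgradAt s g w x)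
    (hwρ : ‖w‖ ≤ ρ) (hyf : y ∈ sf) (hy : y ∈ s) :
    ‖p - y‖ ^ 2 ≤ ‖x - y‖ ^ 2 + (1 + 2 * ρ + 2 * ρ ^ 2) * β ^ 2
      + 2 * (β / max 1 ‖u‖) * ((f y + g y) - (f x + g x)) := by
  set α := β / max 1 ‖u‖
  have hmax : 0 < max 1 ‖u‖ := lt_max_of_lt_left one_pos
  have hα : 0 < α := div_pos hβ hmax
  have hαβ : α ≤ β := div_le_self hβ.le (le_max_left _ _)
  have hαu : α * ‖u‖ ≤ β := by
    rw [div_mul_eq_mul_div, div_le_iff₀ hmax]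
    exact mul_le_mul_of_nonneg_left (le_max_right _ _) hβ.le
  have hρ : 0 ≤ ρ := (norm_nonneg w).trans hwρ
  have h1 : (α * ‖u‖) ^ 2 ≤ β ^ 2 := by gcongr
  have h2 : ‖w‖ * (α * ‖u‖) * α ≤ ρ * β * β := by gcongr
  have h3 : (α * ‖w‖) ^ 2 ≤ (β * ρ) ^ 2 := by gcongr
  nlinarith [hp.norm_sub_sq_le hg hα hx hu hw hyf hy]

end Prox

theorem ConvexOn.exists_le_of_isBounded_range [CompleteSpace H] {S : Set H} {F : H → ℝ}
    (hF : ConvexOn ℝ S F) (hS : IsClosed S) (hlsc : LowerSemicontinuousOn F S) {x : ℕ → H}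
    (hxS : ∀ k, x k ∈ S) (hx : IsBounded (Set.range x)) {m : ℝ}
    (hm : ∀ ε > 0, ∃ k, F (x k) < m + ε) : ∃ q ∈ S, F q ≤ m := by
  obtain ⟨R, hR⟩ := hx.subset_closedBall 0
  set D : ℕ → Set H := fun n => (S ∩ F ⁻¹' Set.Iic (m + 1 / (n + 1))) ∩ closedBall 0 R
  have hanti : Antitone D := fun n n' hnn' z hz =>
    ⟨⟨hz.1.1, le_trans hz.1.2 (add_le_add_right (Nat.one_div_le_one_div hnn') m)⟩, hz.2⟩
  have hne : ∀ n, (D n).Nonempty := fun n => by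
    obtain ⟨k, hk⟩ := hm _ Nat.one_div_pos_of_nat
    exact ⟨x k, ⟨hxS k, hk.le⟩, hR ⟨k, rfl⟩⟩
  obtain ⟨q, hq⟩ := Convex.nonempty_iInter_of_antitone hanti hne
    (fun n => (hlsc.isClosed_inter_preimage_Iic hS _).inter isClosed_closedBall)
    (fun n => (hF.convex_le _).inter (convex_closedBall _ _))
    (isBounded_closedBall.subset Set.inter_subset_right)
  rw [Set.mem_iInter] at hq
  refine ⟨q, (hq 0).1.1, le_of_forall_pos_le_add fun ε hε => ?_⟩
  obtain ⟨n, hn⟩ := exists_nat_one_div_lt hε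
  linarith [show F q ≤ m + 1 / (n + 1) from (hq n).1.2]

end Hilbert

theorem pss_exogenous_empty_solset_unbounded_general
    {H : Type*} [NormedAddCommGroup H] [InnerProductSpace ℝ H] [CompleteSpace H]
    (sf sg : Set H) (f g : H → ℝ)
    (hconvf : ConvexOn ℝ sf f) (hconvg : ConvexOn ℝ sg g)
    (hlscf : LowerSemicontinuousOn f sf) (hlscg : LowerSemicontinuousOn g sg)
    (hclg : IsClosed sg) (hdom : sg ⊆ sf)
    (A1 : ∀ V : Set H, V ⊆ sg → Bornology.IsBounded V → IsClosed V →
      ∃ ζ > 0, ∀ z ∈ V, ∀ uu : H, HasSubgradAt sf f uu z → ‖uu‖ ≤ ζ)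
    (A2 : ∃ ρ ≥ (0:ℝ), ∀ z ∈ sg, ∃ ww : H, HasSubgradAt sg g ww z ∧ ‖ww‖ ≤ ρ)
    (x u : ℕ → H) (β : ℕ → ℝ) (hβ : ∀ k, 0 < β k)
    (hβ2 : Summable (fun k => (β k)^2))
    (hβdiv : Filter.Tendsto (fun n => ∑ i ∈ Finset.range n, β i) Filter.atTop Filter.atTop)
    (hx0 : x 0 ∈ sg)
    (hu : ∀ k, HasSubgradAt sf f (u k) (x k))
    (hstep : ∀ k, IsProxPt sg g (β k / max 1 ‖u k‖)
      (x k - (β k / max 1 ‖u k‖) • u k) (x (k+1)))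
    (hempty : SolSet sg f g = ∅) :
    ¬ Bornology.IsBounded (Set.range x) := by
  intro hb
  obtain ⟨ρ, hρ, hg_sub⟩ := A2
  have hxk : ∀ k, x k ∈ sg := fun k => Nat.casesOn k hx0 fun k => (hstep k).1
  obtain ⟨ζ, -, hζ⟩ :=
    A1 _ (closure_minimal (Set.range_subset_iff.2 hxk) hclg) hb.closure isClosed_closure
  have hu_le : ∀ k, ‖u k‖ ≤ ζ := fun k => hζ _ (subset_closure ⟨k, rfl⟩) _ (hu k)
  have hdesc : ∀ k, ∀ y ∈ sg, ‖x (k + 1) - y‖ ^ 2 ≤ ‖x k - y‖ ^ 2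
      + (1 + 2 * ρ + 2 * ρ ^ 2) * β k ^ 2
      + 2 * (β k / max 1 ‖u k‖) * ((f y + g y) - (f (x k) + g (x k))) := fun k y hy => by
    obtain ⟨w, hw, hwρ⟩ := hg_sub (x k) (hxk k)
    exact (hstep k).norm_sub_sq_le_of_exogenous hconvg (hβ k) (hxk k) (hu k) hw hwρ (hdom hy) hy
  have hliminf := exists_lt_add_of_quasiFejer
    (fun k => (div_pos (hβ k) (lt_max_of_lt_left one_pos)).le)
    (tendsto_sum_div_max_one_atTop (fun k => (hβ k).le) hu_le hβdiv)
    (fun k => by positivity) (hβ2.mul_left _) hdesc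
  obtain ⟨w₀, hw₀, -⟩ := hg_sub (x 0) hx0
  have hbdd : BddBelow (Set.range fun k => f (x k) + g (x k)) := by
    have := ((hu 0).add hw₀).bddBelow_image hb
      (Set.range_subset_iff.2 fun k => ⟨hdom (hxk k), hxk k⟩)
    rwa [← Set.range_comp] at this
  set m := ⨅ k, f (x k) + g (x k)
  have hm_le : ∀ y ∈ sg, m ≤ f y + g y := fun y hy => le_of_forall_pos_le_add fun ε hε => by
    obtain ⟨k, hk⟩ := hliminf y hy ε hε
    linarith [ciInf_le hbdd k]
  obtain ⟨q, hq, hqm⟩ := ((hconvf.subset hdom hconvg.1).add hconvg).exists_le_of_isBounded_range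
    hclg ((hlscf.mono hdom).add hlscg) hxk hb fun ε hε =>
      exists_lt_of_ciInf_lt (lt_add_of_pos_right m hε)
  have hsol : q ∈ SolSet sg f g := ⟨hq, fun y hy => hqm.trans (hm_le y hy)⟩
  simp [hempty] at hsol

theorem pss_exogenous_empty_solset_unbounded
    {H : Type*} [NormedAddCommGroup H] [InnerProductSpace ℝ H] [CompleteSpace H]
    (sf sg : Set H) (f g : H → ℝ)
    (hconvf : ConvexOn ℝ sf f) (hconvg : ConvexOn ℝ sg g)
    (hlscf : LowerSemicontinuousOn f sf) (hlscg : LowerSemicontinuousOn g sg)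
    (hclg : IsClosed sg) (hdom : sg ⊆ sf) (hneg : sg.Nonempty)
    (A1 : ∀ V : Set H, V ⊆ sg → Bornology.IsBounded V → IsClosed V →
      ∃ ζ > 0, ∀ z ∈ V, ∀ uu : H, HasSubgradAt sf f uu z → ‖uu‖ ≤ ζ)
    (A2 : ∃ ρ ≥ (0:ℝ), ∀ z ∈ sg, ∃ ww : H, HasSubgradAt sg g ww z ∧ ‖ww‖ ≤ ρ)
    (x u : ℕ → H) (β : ℕ → ℝ) (hβ : ∀ k, 0 < β k)
    (hβ2 : Summable (fun k => (β k)^2))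
    (hβdiv : Filter.Tendsto (fun n => ∑ i ∈ Finset.range n, β i) Filter.atTop Filter.atTop)
    (hx0 : x 0 ∈ sg)
    (hu : ∀ k, HasSubgradAt sf f (u k) (x k))
    (hstep : ∀ k, IsProxPt sg g (β k / max 1 ‖u k‖)
      (x k - (β k / max 1 ‖u k‖) • u k) (x (k+1)))
    (hempty : SolSet sg f g = ∅) :
    ¬ Bornology.IsBounded (Set.range x) :=
  pss_exogenous_empty_solset_unbounded_general sf sg f g hconvf hconvg hlscf hlscg hclg hdom A1 A2 x
    u β hβ hβ2 hβdiv hx0 hu hstep hempty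
end
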